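/- arXiv:1504.05718 — 3 statements merged into one kernel-verified Lean document; each statement's English description precedes it below -/
import Mathlib

section
/- Let n ≥ 2 and m be integers with n ≤ 2^m. Then u_1, u_2, …, u_n are pairwise incongruent modulo 2^m. -/
/-!
From `u (j+1) = 3 u j + 5 (-1)^j` the term `u j` has the parity of `j + 1`, so a congruence
`u i ≡ u j` modulo `2^m` (`m ≥ 1`) forces `i ≡ j (mod 2)`. Then `4 (u j - u i) = 3^i (3^d - 1)`
with `d = j - i` even, so `2^(m+2) ∣ 3^d - 1`. Lifting the exponent gives
`v₂(3^d - 1) = v₂(d) + 2`, hence `2^m ∣ d`, which is impossible for `0 < d < 2^m`.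
-/

/-- The Salajan sequence: `u j = (3^j - 5*(-1)^j)/4`. -/
def salajanU (j : ℕ) : ℤ := ((3 : ℤ) ^ j - 5 * (-1) ^ j) / 4

lemma four_mul_salajanU (j : ℕ) : 4 * salajanU j = 3 ^ j - 5 * (-1) ^ j := by
  refine Int.mul_ediv_cancel' ?_
  have h : (4 : ℤ) ∣ 3 ^ j - (-1) ^ j := by simpa using sub_dvd_pow_sub_pow (3 : ℤ) (-1) j
  have hsplit : (3 : ℤ) ^ j - 5 * (-1) ^ j = (3 ^ j - (-1) ^ j) - 4 * (-1) ^ j := by ring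
  exact hsplit ▸ dvd_sub h (dvd_mul_right _ _)

lemma salajanU_succ (j : ℕ) : salajanU (j + 1) = 3 * salajanU j + 5 * (-1) ^ j := by
  refine mul_left_cancel₀ (four_ne_zero' ℤ) ?_
  linear_combination four_mul_salajanU (j + 1) - 3 * four_mul_salajanU j

lemma odd_salajanU_iff (j : ℕ) : Odd (salajanU j) ↔ Even j := by
  induction j with
  | zero => decide
  | succ j ih =>
    simp [salajanU_succ, Int.odd_add, Int.odd_mul, ih, parity_simps,
      show Odd (3 : ℤ) by decide, show ¬Even (5 : ℤ) by decide]

lemma even_iff_even_of_salajanU_modEq_two {i j : ℕ} (h : salajanU i ≡ salajanU j [ZMOD 2]) :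
    Even i ↔ Even j := by
  rw [← odd_salajanU_iff, ← odd_salajanU_iff, Int.odd_iff, Int.odd_iff, h.eq]

lemma four_mul_salajanU_sub {i j : ℕ} (hij : i ≤ j) (h : Even i ↔ Even j) :
    4 * (salajanU j - salajanU i) = 3 ^ i * (3 ^ (j - i) - 1) := by
  obtain ⟨d, rfl⟩ := Nat.exists_eq_add_of_le hij
  rw [mul_sub, four_mul_salajanU, four_mul_salajanU, neg_one_pow_congr h.symm,
    Nat.add_sub_cancel_left]
  ring

lemma padicValNat_two_three_pow_sub_one {d : ℕ} (hd : d ≠ 0) (he : Even d) :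
    padicValNat 2 (3 ^ d - 1) = padicValNat 2 d + 2 := by
  have h := padicValNat.pow_two_sub_one (x := 3) (by norm_num) (by norm_num) hd he
  have h4 : padicValNat 2 4 = 2 := padicValNat.prime_pow 2
  norm_num [h4] at h
  omega

lemma two_pow_dvd_of_two_pow_add_two_dvd_three_pow_sub_one {m d : ℕ} (he : Even d)
    (h : (2 : ℤ) ^ (m + 2) ∣ 3 ^ d - 1) : 2 ^ m ∣ d := by
  rcases eq_or_ne d 0 with rfl | hd
  · exact dvd_zero _
  have hpos : 3 ^ d - 1 ≠ 0 := Nat.sub_ne_zero_of_lt (Nat.one_lt_pow hd (by norm_num))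
  have hnat : 2 ^ (m + 2) ∣ 3 ^ d - 1 := by
    rw [← Int.natCast_dvd_natCast]
    push_cast [Nat.one_le_pow d 3 (by norm_num)]
    exact h
  rw [padicValNat_dvd_iff_le hpos, padicValNat_two_three_pow_sub_one hd he] at hnat
  exact (padicValNat_dvd_iff_le hd).mpr (by omega)

lemma two_pow_dvd_sub_of_salajanU_modEq {m i j : ℕ} (hm : m ≠ 0) (hij : i ≤ j)
    (h : salajanU i ≡ salajanU j [ZMOD 2 ^ m]) : 2 ^ m ∣ j - i := by
  have hpar : Even i ↔ Even j :=
    even_iff_even_of_salajanU_modEq_two (h.of_dvd (dvd_pow_self 2 hm))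
  have hdvd : (2 : ℤ) ^ (m + 2) ∣ 3 ^ i * (3 ^ (j - i) - 1) := by
    rw [← four_mul_salajanU_sub hij hpar, pow_add, mul_comm]
    exact mul_dvd_mul_left _ (Int.ModEq.dvd h)
  have hcop : IsCoprime ((2 : ℤ) ^ (m + 2)) (3 ^ i) :=
    (Int.isCoprime_iff_gcd_eq_one.mpr rfl).pow
  exact two_pow_dvd_of_two_pow_add_two_dvd_three_pow_sub_one ((Nat.even_sub hij).mpr hpar.symm)
    (hcop.dvd_of_dvd_mul_left hdvd)

theorem salajan_distinct_mod_two_pow_general (n : ℕ) (m : ℕ) (hnm : n ≤ 2 ^ m) :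
    ∀ i j : ℕ, 1 ≤ i → i < j → j ≤ n →
      ¬ (salajanU i ≡ salajanU j [ZMOD (2 : ℤ) ^ m]) := by
  intro i j hi hij hjn h
  have hm : m ≠ 0 := by
    rintro rfl
    simp only [pow_zero] at hnm
    omega
  have := Nat.le_of_dvd (by omega) (two_pow_dvd_sub_of_salajanU_modEq hm hij.le h)
  omega

theorem salajan_distinct_mod_two_pow (n : ℕ) (m : ℕ) (hn : 2 ≤ n) (hnm : n ≤ 2 ^ m) :
    ∀ i j : ℕ, 1 ≤ i → i < j → j ≤ n →
      ¬ (salajanU i ≡ salajanU j [ZMOD (2 : ℤ) ^ m]) :=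
  salajan_distinct_mod_two_pow_general n m hnm
end

section
/- Let p > 3 be a prime with p ≡ 3 (mod 4) such that the multiplicative order of 3 modulo p is p − 1. Then u_2 ≡ u_{(p−1)/2} (mod p); in particular the incongruence index ι(p) satisfies ι(p) ≤ (p−1)/2. -/
/-- The incongruence index of the Salajan sequence modulo `m`: the largest `k` such
that `u 1, …, u k` are pairwise incongruent modulo `m`. -/
noncomputable def salajanIota (m : ℕ) : ℕ :=
  sSup {k : ℕ | ∀ i j : ℕ, 1 ≤ i → i < j → j ≤ k →
    ¬ (salajanU i ≡ salajanU j [ZMOD (m : ℤ)])}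

lemma pow_eq_neg_one_of_orderOf_eq_two_mul {R : Type*} [Ring R] [Nontrivial R]
    [NoZeroDivisors R] (q : ℕ) (hq : q ≠ 2) [CharP R q] {x : R} {m : ℕ} (hm : m ≠ 0)
    (hx : orderOf x = 2 * m) : x ^ m = -1 := by
  have : orderOf (x ^ m) = 2 := by
    rw [orderOf_pow_of_dvd hm (hx ▸ dvd_mul_left m 2), hx, Nat.mul_div_cancel _ (by omega)]
  exact (CharP.orderOf_eq_two_iff q hq).1 this

lemma salajanU_two : salajanU 2 = 1 := by
  decide

lemma salajanU_modEq_one_of_pow_modEq_neg_one {n : ℤ} (hn : IsCoprime n 4) {j : ℕ}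
    (hj : Odd j) (h : 3 ^ j ≡ -1 [ZMOD n]) : salajanU j ≡ 1 [ZMOD n] := by
  have h4 : 4 * salajanU j ≡ 4 * 1 [ZMOD n] := by
    rw [four_mul_salajanU, hj.neg_one_pow]
    simpa using h.add_right 5
  exact (Int.modEq_iff_dvd.2 (hn.dvd_of_dvd_mul_left (by
    simpa [mul_sub] using Int.modEq_iff_dvd.1 h4.symm))).symm

lemma salajanIota_lt_of_modEq {m i j : ℕ} (hi : 1 ≤ i) (hij : i < j)
    (h : salajanU i ≡ salajanU j [ZMOD m]) : salajanIota m < j := by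
  have : salajanIota m ≤ j - 1 := csSup_le' fun k hk ↦ by
    by_contra! hk'
    exact hk i j hi hij (by omega) h
  omega

theorem salajan_iota_P3 (p : ℕ) (hp : p.Prime) (hp3 : 3 < p) (hp4 : p % 4 = 3)
    (hord : orderOf (3 : ZMod p) = p - 1) :
    salajanU 2 ≡ salajanU ((p - 1) / 2) [ZMOD (p : ℤ)] ∧
    salajanIota p ≤ (p - 1) / 2 := by
  have := Fact.mk hp
  set m := (p - 1) / 2
  have hm_odd : Odd m := ⟨(p - 3) / 4, by omega⟩
  have h3 : (3 : ZMod p) ^ m = -1 :=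
    pow_eq_neg_one_of_orderOf_eq_two_mul p (by omega) (by omega) (by omega)
  have h3' : 3 ^ m ≡ -1 [ZMOD p] := (ZMod.intCast_eq_intCast_iff _ _ _).1 (by push_cast; exact h3)
  have hp_coprime : IsCoprime (p : ℤ) (2 ^ 2 : ℕ) :=
    ((Nat.coprime_primes hp Nat.prime_two).2 (by omega)).pow_right 2 |>.isCoprime
  have key : salajanU 2 ≡ salajanU m [ZMOD p] :=
    salajanU_two ▸ (salajanU_modEq_one_of_pow_modEq_neg_one hp_coprime hm_odd h3').symm
  exact ⟨key, (salajanIota_lt_of_modEq (by norm_num) (by omega) key).le⟩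
end

section
/- Let G be a finite abelian group and A, B nonempty subsets of G with A ∩ (B + B) = ∅. Then |B| ≤ Â·|G| / (|A| + Â), where Â = max over nontrivial characters ψ of G of |∑_{a∈A} ψ(a)|. -/
/-!
Write `Ŝ(ψ) = ∑_{s ∈ S} ψ(s)`. Since no element of `A` is a sum of two elements of `B`,
orthogonality of characters gives `∑_ψ Â(ψ) conj(B̂(ψ))² = |G| · #{(a, b, b') | a = b + b'} = 0`.
The trivial character contributes `|A||B|²`, so `|A||B|²` is at most
`max_{ψ ≠ 0} |Â(ψ)| · ∑_{ψ ≠ 0} |B̂(ψ)|² = max_{ψ ≠ 0} |Â(ψ)| · (|G||B| - |B|²)` by Parseval;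
divide by `|B|`.
-/

open Finset ComplexConjugate

section CharSum

variable {G : Type*} [AddCommGroup G]

def charSum (s : Finset G) (ψ : AddChar G ℂ) : ℂ := ∑ a ∈ s, ψ a

@[simp]
lemma charSum_zero (s : Finset G) : charSum s 0 = #s := by simp [charSum]

lemma conj_charSum [Finite G] (s : Finset G) (ψ : AddChar G ℂ) :
    conj (charSum s ψ) = ∑ b ∈ s, ψ (-b) := by
  simp [charSum, AddChar.map_neg_eq_conj]

lemma charSum_mul_conj [Finite G] (s t : Finset G) (ψ : AddChar G ℂ) :
    charSum s ψ * conj (charSum t ψ) = ∑ x ∈ s ×ˢ t, ψ (x.1 - x.2) := by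
  rw [conj_charSum, charSum, sum_mul_sum, sum_product]
  simp only [sub_eq_add_neg, AddChar.map_add_eq_mul]

lemma charSum_mul_conj_mul [Finite G] (s t u : Finset G) (ψ : AddChar G ℂ) :
    charSum s ψ * conj (charSum t ψ * charSum u ψ) =
      ∑ x ∈ s ×ˢ t ×ˢ u, ψ (x.1 - (x.2.1 + x.2.2)) := by
  rw [map_mul, conj_charSum, conj_charSum, sum_mul_sum, charSum, sum_mul_sum]
  simp only [sum_product, mul_sum, sub_eq_add_neg, neg_add, AddChar.map_add_eq_mul]

variable [Fintype G] [DecidableEq G]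

lemma sum_addChar_sum_apply {ι : Type*} (s : Finset ι) (f : ι → G) :
    ∑ ψ : AddChar G ℂ, ∑ i ∈ s, ψ (f i) = Fintype.card G * #{i ∈ s | f i = 0} := by
  rw [sum_comm]
  simp [AddChar.sum_apply_eq_ite, sum_ite, mul_comm]

lemma sum_norm_charSum_sq (s : Finset G) :
    ∑ ψ : AddChar G ℂ, ‖charSum s ψ‖ ^ 2 = Fintype.card G * #s := by
  have h := sum_addChar_sum_apply (s ×ˢ s) fun x ↦ x.1 - x.2
  have hdiag : #{x ∈ s ×ˢ s | x.1 - x.2 = 0} = #s := by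
    rw [card_filter, sum_product]
    simp [sub_eq_zero]
  simp_rw [← charSum_mul_conj, Complex.mul_conj', hdiag] at h
  exact_mod_cast h

lemma sum_charSum_mul_conj_mul (s t u : Finset G) :
    ∑ ψ : AddChar G ℂ, charSum s ψ * conj (charSum t ψ * charSum u ψ) =
      Fintype.card G * #{x ∈ s ×ˢ t ×ˢ u | x.1 = x.2.1 + x.2.2} := by
  simp_rw [charSum_mul_conj_mul, sum_addChar_sum_apply, sub_eq_zero]

lemma card_mul_card_sq_le_of_forall_ne_add (A B : Finset G) {M : ℝ}
    (hdisj : ∀ a ∈ A, ∀ b ∈ B, ∀ b' ∈ B, a ≠ b + b')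
    (hM : ∀ ψ : AddChar G ℂ, ψ ≠ 0 → ‖charSum A ψ‖ ≤ M) :
    (#A : ℝ) * #B ^ 2 ≤ M * (Fintype.card G * #B - #B ^ 2) := by
  set F : AddChar G ℂ → ℂ := fun ψ ↦ charSum A ψ * conj (charSum B ψ * charSum B ψ)
  have hzero : ∑ ψ, F ψ = 0 := by
    rw [sum_charSum_mul_conj_mul, filter_false_of_mem, card_empty, Nat.cast_zero, mul_zero]
    simp only [mem_product]
    exact fun x hx ↦ hdisj _ hx.1 _ hx.2.1 _ hx.2.2
  have htrivial : F 0 = #A * #B ^ 2 := by simp [F, sq]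
  calc (#A : ℝ) * #B ^ 2 = ‖∑ ψ ∈ univ.erase 0, F ψ‖ := by
        rw [← add_sum_erase _ _ (mem_univ 0), htrivial] at hzero
        rw [eq_neg_of_add_eq_zero_right hzero]
        simp
    _ ≤ ∑ ψ ∈ univ.erase 0, M * ‖charSum B ψ‖ ^ 2 := by
        refine norm_sum_le_of_le _ fun ψ hψ ↦ ?_
        rw [norm_mul, map_mul, norm_mul, Complex.norm_conj, ← sq]
        gcongr
        exact hM ψ (ne_of_mem_erase hψ)
    _ = M * (Fintype.card G * #B - #B ^ 2) := by
        rw [← mul_sum, sum_erase_eq_sub (mem_univ 0), sum_norm_charSum_sq]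
        simp

end CharSum

theorem sumset_avoiding_bound_general (G : Type*) [AddCommGroup G] [Fintype G]
    (A B : Finset G) (hA : A.Nonempty)
    (hdisj : ∀ a ∈ A, ∀ b ∈ B, ∀ b' ∈ B, a ≠ b + b')
    (Ahat : ℝ)
    (hAhat : IsGreatest
      {x : ℝ | ∃ ψ : AddChar G ℂ, ψ ≠ 1 ∧ x = ‖∑ a ∈ A, ψ a‖} Ahat) :
    (B.card : ℝ) ≤ Ahat * (Fintype.card G) / ((A.card : ℝ) + Ahat) := by
  classical
  have hAhat_nonneg : 0 ≤ Ahat := by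
    obtain ⟨ψ, -, rfl⟩ := hAhat.1
    positivity
  have key := card_mul_card_sq_le_of_forall_ne_add A B hdisj fun ψ hψ ↦ hAhat.2 ⟨ψ, hψ, rfl⟩
  have hA_pos : (0 : ℝ) < #A := by exact_mod_cast hA.card_pos
  rw [le_div_iff₀ (by positivity)]
  rcases (Nat.cast_nonneg (α := ℝ) #B).eq_or_lt with hB | hB
  · rw [← hB, zero_mul]
    positivity
  · refine le_of_mul_le_mul_left ?_ hB
    linear_combination key

theorem sumset_avoiding_bound (G : Type*) [AddCommGroup G] [Fintype G]
    (A B : Finset G) (hA : A.Nonempty) (hB : B.Nonempty)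
    (hdisj : ∀ a ∈ A, ∀ b ∈ B, ∀ b' ∈ B, a ≠ b + b')
    (Ahat : ℝ)
    (hAhat : IsGreatest
      {x : ℝ | ∃ ψ : AddChar G ℂ, ψ ≠ 1 ∧ x = ‖∑ a ∈ A, ψ a‖} Ahat) :
    (B.card : ℝ) ≤ Ahat * (Fintype.card G) / ((A.card : ℝ) + Ahat) :=
  sumset_avoiding_bound_general G A B hA hdisj Ahat hAhat
end
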